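/- arXiv:1506.01080 — 5 statements merged into one kernel-verified Lean document; each statement's English description precedes it below -/
import Mathlib

section
/- Let τ > 0, t_k = k·τ, and suppose the jump times lie on the grid: θᵢ = jᵢ·τ with jᵢ a natural number, i = 1, 2, 3. Define m₁(t) = c₁ + (c₂ + μ₁)t + (c₃ + μ₂)t²/2 + μ₃t³/6 + a₁H(t − θ₁) + a₂(t − θ₂)H(t − θ₂) + (a₃/2)(t − θ₃)²H(t − θ₃), m₂(t) = c₂ + (c₃ + μ₂)t + μ₃t²/2 + a₂H(t − θ₂) + a₃(t − θ₃)H(t − θ₃), m₃(t) = c₃ + μ₃t + a₃H(t − θ₃). Then for every natural number k: m₁(t_{k+1}) = m₁(t_k) + (μ₁ + m₂(t_k))τ + (μ₂ + m₃(t_k))τ²/2 + μ₃τ³/6 + a₁·δ_{k+1,j₁}, m₂(t_{k+1}) = m₂(t_k) + (μ₂ + m₃(t_k))τ + μ₃τ²/2 + a₂·δ_{k+1,j₂}, m₃(t_{k+1}) = m₃(t_k) + μ₃τ + a₃·δ_{k+1,j₃}, where δ_{k+1,jᵢ} is the Kronecker delta (1 if k + 1 = jᵢ, else 0). In the iterative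 form each jump acts only once on its own component. -/
/-!
On the grid, `t_k - θ` is either nonnegative or at most `-τ`, so a step `[t_k, t_{k+1}]` can meet a
jump time only at its right end. The truncated powers `(t - θ)^n H(t - θ)` with `n ≥ 1` vanish at
`θ`, hence on every step they may be evaluated with `H(t_k - θ)` in place of `H(t_{k+1} - θ)`;
after that the recursion is the exact Taylor expansion of polynomials of degree at most three.
Only the bare step `H(t - θ)` changes its value, by `1`, and only on the step ending at `θ`.
-/

noncomputable def Heaviside (x : ℝ) : ℝ := if 0 ≤ x then 1 else 0

section Heaviside

variable {x τ : ℝ}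

lemma Heaviside_of_nonneg (hx : 0 ≤ x) : Heaviside x = 1 := if_pos hx

lemma Heaviside_of_neg (hx : x < 0) : Heaviside x = 0 := if_neg hx.not_ge

lemma Heaviside_add_of_nonneg_or_add_nonpos (hτ : 0 < τ) (hx : 0 ≤ x ∨ x + τ ≤ 0) :
    Heaviside (x + τ) = Heaviside x + if x + τ = 0 then 1 else 0 := by
  rcases hx with hx | hx
  · rw [Heaviside_of_nonneg hx, Heaviside_of_nonneg (by linarith), if_neg (by linarith)]
    norm_num
  · rw [Heaviside_of_neg (by linarith : x < 0), zero_add]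
    rcases hx.lt_or_eq with hlt | heq
    · rw [Heaviside_of_neg hlt, if_neg hlt.ne]
    · rw [heq, if_pos rfl, Heaviside_of_nonneg le_rfl]

lemma pow_mul_Heaviside_add_of_nonneg_or_add_nonpos (hτ : 0 ≤ τ) {n : ℕ} (hn : n ≠ 0)
    (hx : 0 ≤ x ∨ x + τ ≤ 0) :
    (x + τ) ^ n * Heaviside (x + τ) = (x + τ) ^ n * Heaviside x := by
  rcases hx with hx | hx
  · rw [Heaviside_of_nonneg hx, Heaviside_of_nonneg (by linarith)]
  rcases hx.lt_or_eq with hlt | heq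
  · rw [Heaviside_of_neg hlt, Heaviside_of_neg (by linarith)]
  · rw [heq, zero_pow hn, zero_mul, zero_mul]

end Heaviside

section Grid

variable {τ : ℝ}

lemma sub_grid_nonneg_or_add_nonpos (hτ : 0 ≤ τ) (j k : ℕ) :
    0 ≤ (k : ℝ) * τ - j * τ ∨ (k : ℝ) * τ - j * τ + τ ≤ 0 := by
  rcases le_or_gt j k with hjk | hkj
  · left
    have : (j : ℝ) ≤ k := by exact_mod_cast hjk
    nlinarith
  · right
    have : (k : ℝ) + 1 ≤ j := by exact_mod_cast hkj
    nlinarith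

lemma Heaviside_grid_succ (hτ : 0 < τ) (j k : ℕ) :
    Heaviside (((k : ℝ) + 1) * τ - j * τ)
      = Heaviside ((k : ℝ) * τ - j * τ) + if k + 1 = j then 1 else 0 := by
  have hshift : ((k : ℝ) + 1) * τ - j * τ = (k : ℝ) * τ - j * τ + τ := by ring
  have hzero : (k : ℝ) * τ - j * τ + τ = 0 ↔ k + 1 = j := by
    rw [← hshift, sub_eq_zero, mul_left_inj' hτ.ne']
    exact_mod_cast Iff.rfl
  rw [hshift, Heaviside_add_of_nonneg_or_add_nonpos hτ (sub_grid_nonneg_or_add_nonpos hτ.le j k)]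
  simp only [hzero]

lemma pow_mul_Heaviside_grid_succ (hτ : 0 ≤ τ) {n : ℕ} (hn : n ≠ 0) (j k : ℕ) :
    (((k : ℝ) + 1) * τ - j * τ) ^ n * Heaviside (((k : ℝ) + 1) * τ - j * τ)
      = (((k : ℝ) + 1) * τ - j * τ) ^ n * Heaviside ((k : ℝ) * τ - j * τ) := by
  have hshift : ((k : ℝ) + 1) * τ - j * τ = (k : ℝ) * τ - j * τ + τ := by ring
  rw [hshift]
  exact pow_mul_Heaviside_add_of_nonneg_or_add_nonpos hτ hn (sub_grid_nonneg_or_add_nonpos hτ j k)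

end Grid

/-- Iterative form of the mean of the three-state clock model with instantaneous jumps
on a uniform grid `t_k = k·τ`, `θᵢ = jᵢ·τ`: each jump acts only once on its own
component, via the Kronecker delta `δ_{k+1,jᵢ}`. -/
theorem clock_mean_with_jumps_iterative
    (c₁ c₂ c₃ μ₁ μ₂ μ₃ a₁ a₂ a₃ τ : ℝ) (hτ : 0 < τ)
    (j₁ j₂ j₃ : ℕ) (θ₁ θ₂ θ₃ : ℝ)
    (hθ₁ : θ₁ = (j₁ : ℝ) * τ) (hθ₂ : θ₂ = (j₂ : ℝ) * τ) (hθ₃ : θ₃ = (j₃ : ℝ) * τ)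
    (m₁ m₂ m₃ : ℝ → ℝ)
    (hm₁ : ∀ t : ℝ, m₁ t = c₁ + (c₂ + μ₁) * t + (c₃ + μ₂) * t ^ 2 / 2 + μ₃ * t ^ 3 / 6
              + a₁ * Heaviside (t - θ₁) + a₂ * (t - θ₂) * Heaviside (t - θ₂)
              + a₃ / 2 * (t - θ₃) ^ 2 * Heaviside (t - θ₃))
    (hm₂ : ∀ t : ℝ, m₂ t = c₂ + (c₃ + μ₂) * t + μ₃ * t ^ 2 / 2
              + a₂ * Heaviside (t - θ₂) + a₃ * (t - θ₃) * Heaviside (t - θ₃))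
    (hm₃ : ∀ t : ℝ, m₃ t = c₃ + μ₃ * t + a₃ * Heaviside (t - θ₃)) :
    ∀ k : ℕ,
      m₁ (((k : ℝ) + 1) * τ) = m₁ ((k : ℝ) * τ) + (μ₁ + m₂ ((k : ℝ) * τ)) * τ
          + (μ₂ + m₃ ((k : ℝ) * τ)) * τ ^ 2 / 2 + μ₃ * τ ^ 3 / 6
          + a₁ * (if k + 1 = j₁ then 1 else 0) ∧
      m₂ (((k : ℝ) + 1) * τ) = m₂ ((k : ℝ) * τ) + (μ₂ + m₃ ((k : ℝ) * τ)) * τ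
          + μ₃ * τ ^ 2 / 2 + a₂ * (if k + 1 = j₂ then 1 else 0) ∧
      m₃ (((k : ℝ) + 1) * τ) = m₃ ((k : ℝ) * τ) + μ₃ * τ
          + a₃ * (if k + 1 = j₃ then 1 else 0) := by
  intro k
  subst hθ₁ hθ₂ hθ₃
  have step (j : ℕ) := Heaviside_grid_succ hτ j k
  have ramp (j : ℕ) := pow_mul_Heaviside_grid_succ hτ.le one_ne_zero j k
  have quad (j : ℕ) := pow_mul_Heaviside_grid_succ hτ.le two_ne_zero j k
  simp only [hm₁, hm₂, hm₃]
  refine ⟨?_, ?_, ?_⟩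
  · linear_combination a₁ * step j₁ + a₂ * ramp j₂ + a₃ / 2 * quad j₃
  · linear_combination a₂ * step j₂ + a₃ * ramp j₃
  · linear_combination a₃ * step j₃
end

section
/- Let τ > 0, t_k = k·τ, and suppose θ₀ = j₀·τ and θ₁ = j₁·τ with natural numbers j₀ < j₁; set Δ = θ₁ − θ₀. Define m₁(t) = c₁ + (c₂ + μ₁)t + (c₃ + μ₂)t²/2 + μ₃t³/6 + a·H(t − θ₁) + (a/Δ)(t − θ₀)·(H(t − θ₀) − H(t − θ₁)), m₂(t) = c₂ + (c₃ + μ₂)t + μ₃t²/2 + (a/Δ)(H(t − θ₀) − H(t − θ₁)), m₃(t) = c₃ + μ₃t. Then for every natural number k: m₁(t_{k+1}) = m₁(t_k) + (μ₁ + m₂(t_k))τ + (μ₂ + m₃(t_k))τ²/2 + μ₃τ³/6, m₂(t_{k+1}) = m₂(t_k) + (μ₂ + m₃(t_k))τ + μ₃τ²/2 + (a/Δ)·(δ_{k+1,j₀} − δ_{k+1,j₁}), and m₃(t_{k+1}) = m₃(t_k) + μ₃τ, where δ is the Kronecker delta. The effect of the two opposite jumps is present only in the second component of the iterative form. -/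
/-!
On the grid `t_k = kτ` the polynomial parts of `m₁, m₂, m₃` satisfy the iteration exactly (it is
their Taylor expansion, which terminates). Between consecutive grid points `H(t - jτ)` jumps by
the Kronecker delta `δ_{k+1,j}`, and `t_{k+1} - θ_j` vanishes where that delta does not, so the
ramp `(a/Δ)(t - θ₀)` of `m₁` switches off at `θ₁` by exactly the amount `a` that the step
`a H(t - θ₁)` switches on: only `m₂` sees the jumps.
-/

lemma heaviside_mul_of_pos {τ : ℝ} (hτ : 0 < τ) (x : ℝ) : Heaviside (x * τ) = Heaviside x := by
  simp only [Heaviside, mul_nonneg_iff_of_pos_right hτ]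

lemma heaviside_natCast_sub (n j : ℕ) : Heaviside ((n : ℝ) - j) = if j ≤ n then 1 else 0 := by
  simp only [Heaviside, sub_nonneg, Nat.cast_le]

lemma heaviside_grid_succ {τ : ℝ} (hτ : 0 < τ) (k j : ℕ) :
    Heaviside (((k : ℝ) + 1) * τ - j * τ)
      = Heaviside ((k : ℝ) * τ - j * τ) + if k + 1 = j then 1 else 0 := by
  have hsucc : ((k : ℝ) + 1) = ((k + 1 : ℕ) : ℝ) := by push_cast; rfl
  rw [← sub_mul, ← sub_mul, heaviside_mul_of_pos hτ, heaviside_mul_of_pos hτ, hsucc,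
    heaviside_natCast_sub, heaviside_natCast_sub]
  split_ifs <;> first | omega | norm_num

lemma grid_sub_mul_ite_eq_zero (τ : ℝ) (k j : ℕ) :
    (((k : ℝ) + 1) * τ - j * τ) * (if k + 1 = j then 1 else 0) = 0 := by
  split_ifs with h
  · subst h; push_cast; ring
  · exact mul_zero _

/-- Iterative form of the mean of the clock model with two equal and opposite frequency
jumps on a uniform grid `t_k = k·τ`, `θ₀ = j₀·τ`, `θ₁ = j₁·τ`, `Δ = θ₁ − θ₀`: the effect
of the two opposite jumps is present only in the second component. -/
theorem clock_mean_two_opposite_jumps_iterative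
    (c₁ c₂ c₃ μ₁ μ₂ μ₃ a τ : ℝ) (hτ : 0 < τ)
    (j₀ j₁ : ℕ) (hj : j₀ < j₁) (θ₀ θ₁ : ℝ)
    (hθ₀ : θ₀ = (j₀ : ℝ) * τ) (hθ₁ : θ₁ = (j₁ : ℝ) * τ)
    (m₁ m₂ m₃ : ℝ → ℝ)
    (hm₁ : ∀ t : ℝ, m₁ t = c₁ + (c₂ + μ₁) * t + (c₃ + μ₂) * t ^ 2 / 2 + μ₃ * t ^ 3 / 6
              + a * Heaviside (t - θ₁)
              + a / (θ₁ - θ₀) * (t - θ₀) * (Heaviside (t - θ₀) - Heaviside (t - θ₁)))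
    (hm₂ : ∀ t : ℝ, m₂ t = c₂ + (c₃ + μ₂) * t + μ₃ * t ^ 2 / 2
              + a / (θ₁ - θ₀) * (Heaviside (t - θ₀) - Heaviside (t - θ₁)))
    (hm₃ : ∀ t : ℝ, m₃ t = c₃ + μ₃ * t) :
    ∀ k : ℕ,
      m₁ (((k : ℝ) + 1) * τ) = m₁ ((k : ℝ) * τ) + (μ₁ + m₂ ((k : ℝ) * τ)) * τ
          + (μ₂ + m₃ ((k : ℝ) * τ)) * τ ^ 2 / 2 + μ₃ * τ ^ 3 / 6 ∧
      m₂ (((k : ℝ) + 1) * τ) = m₂ ((k : ℝ) * τ) + (μ₂ + m₃ ((k : ℝ) * τ)) * τ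
          + μ₃ * τ ^ 2 / 2
          + a / (θ₁ - θ₀) * ((if k + 1 = j₀ then 1 else 0) - (if k + 1 = j₁ then 1 else 0)) ∧
      m₃ (((k : ℝ) + 1) * τ) = m₃ ((k : ℝ) * τ) + μ₃ * τ := by
  subst hθ₀ hθ₁
  intro k
  have hΔ : (j₁ : ℝ) * τ - j₀ * τ ≠ 0 := by
    rw [← sub_mul]
    exact mul_ne_zero (sub_ne_zero.mpr (by exact_mod_cast hj.ne')) hτ.ne'
  have hcancel := div_mul_cancel₀ a hΔ
  have h₀ := grid_sub_mul_ite_eq_zero τ k j₀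
  have h₁ := grid_sub_mul_ite_eq_zero τ k j₁
  refine ⟨?_, ?_, ?_⟩
  · rw [hm₁, hm₁, hm₂, hm₃, heaviside_grid_succ hτ, heaviside_grid_succ hτ]
    linear_combination (a / ((j₁ : ℝ) * τ - j₀ * τ)) * (h₀ - h₁)
      - (if k + 1 = j₁ then (1 : ℝ) else 0) * hcancel
  · rw [hm₂, hm₂, hm₃, heaviside_grid_succ hτ, heaviside_grid_succ hτ]
    ring
  · simp only [hm₃]
    ring
end

section
/- For all real t and τ, the covariance matrix of the three-state clock model satisfies the propagation identity Σ(t + τ) = Φ(τ) · Σ(t) · Φ(τ)ᵀ + Σ(τ), where Φ(τ) is the state transition matrix. In particular, in the iterative solution the innovation covariance over a step of length τ equals Q = Σ(τ). -/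
open Matrix

/-- The covariance matrix `Σ(t)` of the three-state clock model. -/
noncomputable def clockCov (σ₁ σ₂ σ₃ t : ℝ) : Matrix (Fin 3) (Fin 3) ℝ :=
  !![σ₁ ^ 2 * t + σ₂ ^ 2 * t ^ 3 / 3 + σ₃ ^ 2 * t ^ 5 / 20,
       σ₂ ^ 2 * t ^ 2 / 2 + σ₃ ^ 2 * t ^ 4 / 8, σ₃ ^ 2 * t ^ 3 / 6;
     σ₂ ^ 2 * t ^ 2 / 2 + σ₃ ^ 2 * t ^ 4 / 8,
       σ₂ ^ 2 * t + σ₃ ^ 2 * t ^ 3 / 3, σ₃ ^ 2 * t ^ 2 / 2;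
     σ₃ ^ 2 * t ^ 3 / 6, σ₃ ^ 2 * t ^ 2 / 2, σ₃ ^ 2 * t]

/-- The state transition matrix `Φ(τ)` of the three-state clock model. -/
noncomputable def clockPhi (τ : ℝ) : Matrix (Fin 3) (Fin 3) ℝ :=
  !![1, τ, τ ^ 2 / 2;
     0, 1, τ;
     0, 0, 1]


lemma clockPhi_transpose (τ : ℝ) :
    (clockPhi τ)ᵀ = !![1, 0, 0; τ, 1, 0; τ ^ 2 / 2, τ, 1] := by
  ext i j
  fin_cases i <;> fin_cases j <;> rfl

/-- Covariance propagation identity: `Σ(t + τ) = Φ(τ)·Σ(t)·Φ(τ)ᵀ + Σ(τ)`; in particular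
the innovation covariance over a step of length `τ` is `Q = Σ(τ)`. -/
theorem clockCov_propagation (σ₁ σ₂ σ₃ t τ : ℝ) :
    clockCov σ₁ σ₂ σ₃ (t + τ)
      = clockPhi τ * clockCov σ₁ σ₂ σ₃ t * (clockPhi τ)ᵀ + clockCov σ₁ σ₂ σ₃ τ := by
  rw [clockPhi_transpose]
  simp only [clockCov, clockPhi, mul_fin_three]
  ext i j
  fin_cases i <;> fin_cases j <;> simp <;> ring
end

section
/- For all real σ₁, σ₂, σ₃ and every t ≥ 0, the matrix Σ(t) is positive semidefinite. -/
/-!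
`Σ(t)` is the Gramian `∫₀ᵗ (σ₁² e eᵀ + σ₂² u(s) u(s)ᵀ + σ₃² w(s) w(s)ᵀ) ds` with
`e = (1, 0, 0)`, `u(s) = (s, 1, 0)` and `w(s) = (s²/2, s, 1)`. Completing squares in its
quadratic form (an `LDLᵀ` factorisation of the Gram matrices of `1, s, s²/2` on `[0, t]`)
writes `xᵀ Σ(t) x` as `t` times a sum of squares.
-/

open Matrix

theorem clockCov_isHermitian (σ₁ σ₂ σ₃ t : ℝ) : (clockCov σ₁ σ₂ σ₃ t).IsHermitian := by
  ext i j
  fin_cases i <;> fin_cases j <;> simp [clockCov]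

theorem dotProduct_clockCov_mulVec (σ₁ σ₂ σ₃ t : ℝ) (x : Fin 3 → ℝ) :
    x ⬝ᵥ clockCov σ₁ σ₂ σ₃ t *ᵥ x =
      t * (σ₁ ^ 2 * x 0 ^ 2
        + σ₂ ^ 2 * ((x 1 + x 0 * t / 2) ^ 2 + (x 0 * t) ^ 2 / 12)
        + σ₃ ^ 2 * ((x 2 + x 1 * t / 2 + x 0 * t ^ 2 / 6) ^ 2
          + (x 1 * t + x 0 * t ^ 2 / 2) ^ 2 / 12 + (x 0 * t ^ 2) ^ 2 / 720)) := by
  simp only [dotProduct, mulVec, clockCov, of_apply, cons_val', cons_val_fin_one,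
    Fin.sum_univ_three, cons_val_zero, cons_val_one, cons_val]
  ring

/-- For `t ≥ 0` the covariance matrix `Σ(t)` is positive semidefinite. -/
theorem clockCov_posSemidef (σ₁ σ₂ σ₃ t : ℝ) (ht : 0 ≤ t) :
    (clockCov σ₁ σ₂ σ₃ t).PosSemidef := by
  rw [posSemidef_iff_dotProduct_mulVec]
  refine ⟨clockCov_isHermitian σ₁ σ₂ σ₃ t, fun x => ?_⟩
  rw [star_trivial, dotProduct_clockCov_mulVec]
  positivity
end

section
/- For all real σ₁, σ₂ and every real σ₃ ≠ 0 and every t > 0, the matrix Σ(t) is positive definite; hence the Normal distribution of the clock state at any positive time is nondegenerate whenever the frequency-drift noise coefficient σ₃ is nonzero. -/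
/-!
Completing the square in the quadratic form of `Σ(t)` gives, for `x = (a, b, c)`,
`xᵀ Σ(t) x = d₁ a² + d₂ (b + t a / 2)² + d₃ (c + t b / 2 + t² a / 6)²` with
`d₁ = σ₁² t + σ₂² t³ / 12 + σ₃² t⁵ / 720`, `d₂ = σ₂² t + σ₃² t³ / 12`, `d₃ = σ₃² t`.
So `Σ(t) = Lᵀ D L`, where `L` is the unitriangular matrix of this substitution and
`D = diag(d₁, d₂, d₃)`; every `dᵢ` contains a term `σ₃² tᵏ` with `k` odd, which is positive
once `σ₃ ≠ 0` and `t > 0`.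
-/

namespace ClockCov

open Matrix

noncomputable def ldlFactor (t : ℝ) : Matrix (Fin 3) (Fin 3) ℝ :=
  !![1, 0, 0;
     t / 2, 1, 0;
     t ^ 2 / 6, t / 2, 1]

noncomputable def ldlPivots (σ₁ σ₂ σ₃ t : ℝ) : Fin 3 → ℝ :=
  ![σ₁ ^ 2 * t + σ₂ ^ 2 * t ^ 3 / 12 + σ₃ ^ 2 * t ^ 5 / 720,
    σ₂ ^ 2 * t + σ₃ ^ 2 * t ^ 3 / 12,
    σ₃ ^ 2 * t]

theorem clockCov_eq_ldl (σ₁ σ₂ σ₃ t : ℝ) :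
    clockCov σ₁ σ₂ σ₃ t = (ldlFactor t)ᵀ * diagonal (ldlPivots σ₁ σ₂ σ₃ t) * ldlFactor t := by
  ext i j
  fin_cases i <;> fin_cases j <;>
    simp [clockCov, ldlFactor, ldlPivots, Matrix.mul_apply, Fin.sum_univ_three] <;> ring

theorem isUnit_ldlFactor (t : ℝ) : IsUnit (ldlFactor t) := by
  rw [isUnit_iff_isUnit_det]
  simp [ldlFactor, det_fin_three]

theorem ldlPivots_pos (σ₁ σ₂ : ℝ) {σ₃ t : ℝ} (hσ₃ : σ₃ ≠ 0) (ht : 0 < t) (i : Fin 3) :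
    0 < ldlPivots σ₁ σ₂ σ₃ t i := by
  fin_cases i <;> simp [ldlPivots] <;> positivity

end ClockCov

open ClockCov Matrix in
/-- If the frequency-drift noise coefficient `σ₃` is nonzero, then for every `t > 0` the
covariance matrix `Σ(t)` is positive definite, i.e. the Normal distribution of the clock
state at any positive time is nondegenerate. -/
theorem clockCov_posDef (σ₁ σ₂ σ₃ t : ℝ) (hσ₃ : σ₃ ≠ 0) (ht : 0 < t) :
    (clockCov σ₁ σ₂ σ₃ t).PosDef := by
  have hD : (diagonal (ldlPivots σ₁ σ₂ σ₃ t)).PosDef :=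
    posDef_diagonal_iff.2 (ldlPivots_pos σ₁ σ₂ hσ₃ ht)
  rw [clockCov_eq_ldl, ← conjTranspose_eq_transpose_of_trivial]
  exact hD.conjTranspose_mul_mul_same (mulVec_injective_of_isUnit (isUnit_ldlFactor t))
end
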